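/- Let (Σ, A, →, s₀) be a labelled transition system and R ⊆ Σ×Σ a strong bisimulation, i.e., a symmetric relation such that whenever (s, t) ∈ R and s →a s', there exists t' with t →a t' and (s', t') ∈ R. Then for every closed modal μ-calculus formula φ and all (s, t) ∈ R, s ∈ [[φ]] if and only if t ∈ [[φ]]; that is, strongly bisimilar states satisfy exactly the same closed modal μ-calculus formulas. -/
import Mathlib


/-- A labelled transition system: a transition relation and an initial state. -/
structure LTS (σ : Type) (α : Type) where
  trans : σ → α → σ → Prop
  init : σ

/-- Modal μ-calculus formulas over action labels `α` and propositional variables `χ`. -/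
inductive Form (α χ : Type) : Type where
  | ff : Form α χ
  | tt : Form α χ
  | or : Form α χ → Form α χ → Form α χ
  | and : Form α χ → Form α χ → Form α χ
  | neg : Form α χ → Form α χ
  | dia : α → Form α χ → Form α χ
  | box : α → Form α χ → Form α χ
  | mu : χ → Form α χ → Form α χ
  | nu : χ → Form α χ → Form α χ
  | var : χ → Form α χ

/-- Semantics of the modal μ-calculus on an LTS, in a propositional context. -/
def sem {σ α χ : Type} [DecidableEq χ] (L : LTS σ α) : Form α χ → (χ → Set σ) → Set σ
  | Form.ff, _ => ∅
  | Form.tt, _ => Set.univ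
  | Form.or φ₁ φ₂, ρ => sem L φ₁ ρ ∪ sem L φ₂ ρ
  | Form.and φ₁ φ₂, ρ => sem L φ₁ ρ ∩ sem L φ₂ ρ
  | Form.neg φ₀, ρ => Set.univ \ sem L φ₀ ρ
  | Form.dia a φ₀, ρ => {s | ∃ s', L.trans s a s' ∧ s' ∈ sem L φ₀ ρ}
  | Form.box a φ₀, ρ => {s | ∀ s', L.trans s a s' → s' ∈ sem L φ₀ ρ}
  | Form.mu X φ₀, ρ => ⋂₀ {U : Set σ | sem L φ₀ (Function.update ρ X U) ⊆ U}
  | Form.nu X φ₀, ρ => ⋃₀ {U : Set σ | U ⊆ sem L φ₀ (Function.update ρ X U)}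
  | Form.var X, ρ => ρ X

/-- Free variables of a formula. -/
def fvF {α χ : Type} : Form α χ → Set χ
  | Form.ff => ∅
  | Form.tt => ∅
  | Form.or φ₁ φ₂ => fvF φ₁ ∪ fvF φ₂
  | Form.and φ₁ φ₂ => fvF φ₁ ∪ fvF φ₂
  | Form.neg φ₀ => fvF φ₀
  | Form.dia _ φ₀ => fvF φ₀
  | Form.box _ φ₀ => fvF φ₀
  | Form.mu X φ₀ => fvF φ₀ \ {X}
  | Form.nu X φ₀ => fvF φ₀ \ {X}
  | Form.var X => {X}

/-- Bound variables of a formula. -/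
def bvF {α χ : Type} : Form α χ → Set χ
  | Form.ff => ∅
  | Form.tt => ∅
  | Form.or φ₁ φ₂ => bvF φ₁ ∪ bvF φ₂
  | Form.and φ₁ φ₂ => bvF φ₁ ∪ bvF φ₂
  | Form.neg φ₀ => bvF φ₀
  | Form.dia _ φ₀ => bvF φ₀
  | Form.box _ φ₀ => bvF φ₀
  | Form.mu X φ₀ => insert X (bvF φ₀)
  | Form.nu X φ₀ => insert X (bvF φ₀)
  | Form.var _ => ∅

/-- Sub-formula relation. -/
inductive SubF {α χ : Type} (φ : Form α χ) : Form α χ → Prop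
  | refl : SubF φ φ
  | or_l {ψ₁ ψ₂} : SubF φ (Form.or ψ₁ ψ₂) → SubF φ ψ₁
  | or_r {ψ₁ ψ₂} : SubF φ (Form.or ψ₁ ψ₂) → SubF φ ψ₂
  | and_l {ψ₁ ψ₂} : SubF φ (Form.and ψ₁ ψ₂) → SubF φ ψ₁
  | and_r {ψ₁ ψ₂} : SubF φ (Form.and ψ₁ ψ₂) → SubF φ ψ₂
  | neg {ψ} : SubF φ (Form.neg ψ) → SubF φ ψ
  | dia {a ψ} : SubF φ (Form.dia a ψ) → SubF φ ψ
  | box {a ψ} : SubF φ (Form.box a ψ) → SubF φ ψ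
  | mu {X ψ} : SubF φ (Form.mu X ψ) → SubF φ ψ
  | nu {X ψ} : SubF φ (Form.nu X ψ) → SubF φ ψ

mutual
/-- Every free occurrence of `X` is under an even number of negations. -/
def posIn {α χ : Type} [DecidableEq χ] : Form α χ → χ → Prop
  | Form.ff, _ => True
  | Form.tt, _ => True
  | Form.or φ₁ φ₂, X => posIn φ₁ X ∧ posIn φ₂ X
  | Form.and φ₁ φ₂, X => posIn φ₁ X ∧ posIn φ₂ X
  | Form.neg φ₀, X => negIn φ₀ X
  | Form.dia _ φ₀, X => posIn φ₀ X
  | Form.box _ φ₀, X => posIn φ₀ X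
  | Form.mu Y φ₀, X => Y = X ∨ posIn φ₀ X
  | Form.nu Y φ₀, X => Y = X ∨ posIn φ₀ X
  | Form.var _, _ => True

/-- Every free occurrence of `X` is under an odd number of negations. -/
def negIn {α χ : Type} [DecidableEq χ] : Form α χ → χ → Prop
  | Form.ff, _ => True
  | Form.tt, _ => True
  | Form.or φ₁ φ₂, X => negIn φ₁ X ∧ negIn φ₂ X
  | Form.and φ₁ φ₂, X => negIn φ₁ X ∧ negIn φ₂ X
  | Form.neg φ₀, X => posIn φ₀ X
  | Form.dia _ φ₀, X => negIn φ₀ X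
  | Form.box _ φ₀, X => negIn φ₀ X
  | Form.mu Y φ₀, X => Y = X ∨ negIn φ₀ X
  | Form.nu Y φ₀, X => Y = X ∨ negIn φ₀ X
  | Form.var Y, X => Y ≠ X
end

/-- Syntactic monotonicity: in every fix-point sub-formula, the bound variable
occurs only under an even number of negations. -/
def SynMono {α χ : Type} [DecidableEq χ] (φ : Form α χ) : Prop :=
  ∀ X ψ, (SubF φ (Form.mu X ψ) ∨ SubF φ (Form.nu X ψ)) → posIn ψ X

theorem SubF.trans' {α χ : Type} {φ ψ θ : Form α χ} (h1 : SubF φ ψ) (h2 : SubF ψ θ) :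
    SubF φ θ := by
  induction h2 with
  | refl => exact h1
  | or_l _ ih => exact SubF.or_l ih
  | or_r _ ih => exact SubF.or_r ih
  | and_l _ ih => exact SubF.and_l ih
  | and_r _ ih => exact SubF.and_r ih
  | neg _ ih => exact SubF.neg ih
  | dia _ ih => exact SubF.dia ih
  | box _ ih => exact SubF.box ih
  | mu _ ih => exact SubF.mu ih
  | nu _ ih => exact SubF.nu ih

lemma synMono_sub {α χ : Type} [DecidableEq χ] {φ ψ : Form α χ}
    (h : SynMono φ) (hsub : SubF φ ψ) : SynMono ψ :=
  fun X θ h' => h X θ (h'.imp (SubF.trans' hsub) (SubF.trans' hsub))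

lemma key_bisim {σ α χ : Type} [DecidableEq χ] (L : LTS σ α) (R : σ → σ → Prop)
    (hsym : ∀ s t, R s t → R t s)
    (hbisim : ∀ s t, R s t → ∀ a s', L.trans s a s' → ∃ t', L.trans t a t' ∧ R s' t') :
    ∀ φ : Form α χ, SynMono φ → ∀ ρ₁ ρ₂ : χ → Set σ,
      (∀ X, X ∈ fvF φ →
        (posIn φ X ∧ ∀ s t, R s t → s ∈ ρ₁ X → t ∈ ρ₂ X) ∨
        (negIn φ X ∧ ∀ s t, R s t → s ∈ ρ₂ X → t ∈ ρ₁ X)) →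
      ∀ s t, R s t → s ∈ sem L φ ρ₁ → t ∈ sem L φ ρ₂ := by
  intro φ
  induction φ with
  | ff =>
    intro _ ρ₁ ρ₂ _ s t _ hs
    simp [sem] at hs
  | tt =>
    intro _ ρ₁ ρ₂ _ s t _ _
    simp [sem]
  | or φ₁ φ₂ ih₁ ih₂ =>
    intro hm ρ₁ ρ₂ hρ s t hR hs
    have hm₁ : SynMono φ₁ := synMono_sub hm (SubF.or_l SubF.refl)
    have hm₂ : SynMono φ₂ := synMono_sub hm (SubF.or_r SubF.refl)
    have hρ₁ : ∀ X, X ∈ fvF φ₁ →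
        (posIn φ₁ X ∧ ∀ s t, R s t → s ∈ ρ₁ X → t ∈ ρ₂ X) ∨
        (negIn φ₁ X ∧ ∀ s t, R s t → s ∈ ρ₂ X → t ∈ ρ₁ X) := by
      intro X hX
      rcases hρ X (Set.mem_union_left _ hX) with ⟨hp, hf⟩ | ⟨hn, hf⟩
      · exact Or.inl ⟨hp.1, hf⟩
      · exact Or.inr ⟨hn.1, hf⟩
    have hρ₂ : ∀ X, X ∈ fvF φ₂ →
        (posIn φ₂ X ∧ ∀ s t, R s t → s ∈ ρ₁ X → t ∈ ρ₂ X) ∨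
        (negIn φ₂ X ∧ ∀ s t, R s t → s ∈ ρ₂ X → t ∈ ρ₁ X) := by
      intro X hX
      rcases hρ X (Set.mem_union_right _ hX) with ⟨hp, hf⟩ | ⟨hn, hf⟩
      · exact Or.inl ⟨hp.2, hf⟩
      · exact Or.inr ⟨hn.2, hf⟩
    rcases hs with hs | hs
    · exact Or.inl (ih₁ hm₁ ρ₁ ρ₂ hρ₁ s t hR hs)
    · exact Or.inr (ih₂ hm₂ ρ₁ ρ₂ hρ₂ s t hR hs)
  | and φ₁ φ₂ ih₁ ih₂ =>
    intro hm ρ₁ ρ₂ hρ s t hR hs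
    have hm₁ : SynMono φ₁ := synMono_sub hm (SubF.and_l SubF.refl)
    have hm₂ : SynMono φ₂ := synMono_sub hm (SubF.and_r SubF.refl)
    have hρ₁ : ∀ X, X ∈ fvF φ₁ →
        (posIn φ₁ X ∧ ∀ s t, R s t → s ∈ ρ₁ X → t ∈ ρ₂ X) ∨
        (negIn φ₁ X ∧ ∀ s t, R s t → s ∈ ρ₂ X → t ∈ ρ₁ X) := by
      intro X hX
      rcases hρ X (Set.mem_union_left _ hX) with ⟨hp, hf⟩ | ⟨hn, hf⟩
      · exact Or.inl ⟨hp.1, hf⟩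
      · exact Or.inr ⟨hn.1, hf⟩
    have hρ₂ : ∀ X, X ∈ fvF φ₂ →
        (posIn φ₂ X ∧ ∀ s t, R s t → s ∈ ρ₁ X → t ∈ ρ₂ X) ∨
        (negIn φ₂ X ∧ ∀ s t, R s t → s ∈ ρ₂ X → t ∈ ρ₁ X) := by
      intro X hX
      rcases hρ X (Set.mem_union_right _ hX) with ⟨hp, hf⟩ | ⟨hn, hf⟩
      · exact Or.inl ⟨hp.2, hf⟩
      · exact Or.inr ⟨hn.2, hf⟩
    exact ⟨ih₁ hm₁ ρ₁ ρ₂ hρ₁ s t hR hs.1, ih₂ hm₂ ρ₁ ρ₂ hρ₂ s t hR hs.2⟩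
  | neg φ₀ ih =>
    intro hm ρ₁ ρ₂ hρ s t hR hs
    have hm₀ : SynMono φ₀ := synMono_sub hm (SubF.neg SubF.refl)
    refine ⟨Set.mem_univ t, fun ht => hs.2 ?_⟩
    refine ih hm₀ ρ₂ ρ₁ ?_ t s (hsym s t hR) ht
    intro X hX
    rcases hρ X hX with ⟨hp, hf⟩ | ⟨hn, hf⟩
    · exact Or.inr ⟨hp, hf⟩
    · exact Or.inl ⟨hn, hf⟩
  | dia a φ₀ ih =>
    intro hm ρ₁ ρ₂ hρ s t hR hs
    obtain ⟨s', htr, hs'⟩ := hs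
    obtain ⟨t', htr', hR'⟩ := hbisim s t hR a s' htr
    exact ⟨t', htr', ih (synMono_sub hm (SubF.dia SubF.refl)) ρ₁ ρ₂ hρ s' t' hR' hs'⟩
  | box a φ₀ ih =>
    intro hm ρ₁ ρ₂ hρ s t hR hs
    intro t' htr'
    obtain ⟨s', htrs, hR'⟩ := hbisim t s (hsym s t hR) a t' htr'
    exact ih (synMono_sub hm (SubF.box SubF.refl)) ρ₁ ρ₂ hρ s' t' (hsym t' s' hR')
      (hs s' htrs)
  | mu X φ₀ ih =>
    intro hm ρ₁ ρ₂ hρ s t hR hs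
    have hm₀ : SynMono φ₀ := synMono_sub hm (SubF.mu SubF.refl)
    have hposX : posIn φ₀ X := hm X φ₀ (Or.inl SubF.refl)
    rw [sem, Set.mem_sInter] at hs ⊢
    intro U hU
    set U' : Set σ := {s | ∀ t, R s t → t ∈ U} with hU'def
    have hρ' : ∀ Y, Y ∈ fvF φ₀ →
        (posIn φ₀ Y ∧ ∀ s t, R s t → s ∈ Function.update ρ₁ X U' Y →
          t ∈ Function.update ρ₂ X U Y) ∨
        (negIn φ₀ Y ∧ ∀ s t, R s t → s ∈ Function.update ρ₂ X U Y →
          t ∈ Function.update ρ₁ X U' Y) := by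
      intro Y hY
      by_cases hYX : Y = X
      · subst hYX
        refine Or.inl ⟨hposX, fun s t hst hsU' => ?_⟩
        rw [Function.update_self] at hsU' ⊢
        exact hsU' t hst
      · have hY' : Y ∈ fvF (Form.mu X φ₀) := ⟨hY, hYX⟩
        rcases hρ Y hY' with ⟨hp, hf⟩ | ⟨hn, hf⟩
        · refine Or.inl ⟨?_, ?_⟩
          · rcases hp with h | h
            · exact absurd h.symm hYX
            · exact h
          · simpa [Function.update_of_ne hYX] using hf
        · refine Or.inr ⟨?_, ?_⟩
          · rcases hn with h | h
            · exact absurd h.symm hYX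
            · exact h
          · simpa [Function.update_of_ne hYX] using hf
    have hpre : sem L φ₀ (Function.update ρ₁ X U') ⊆ U' := by
      intro s' hs' t' hR'
      exact hU (ih hm₀ _ _ hρ' s' t' hR' hs')
    exact hs U' hpre t hR
  | nu X φ₀ ih =>
    intro hm ρ₁ ρ₂ hρ s t hR hs
    have hm₀ : SynMono φ₀ := synMono_sub hm (SubF.nu SubF.refl)
    have hposX : posIn φ₀ X := hm X φ₀ (Or.inr SubF.refl)
    rw [sem, Set.mem_sUnion] at hs ⊢
    obtain ⟨U, hU, hsU⟩ := hs
    set V : Set σ := {t | ∃ s, s ∈ U ∧ R s t} with hVdef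
    have hρ' : ∀ Y, Y ∈ fvF φ₀ →
        (posIn φ₀ Y ∧ ∀ s t, R s t → s ∈ Function.update ρ₁ X U Y →
          t ∈ Function.update ρ₂ X V Y) ∨
        (negIn φ₀ Y ∧ ∀ s t, R s t → s ∈ Function.update ρ₂ X V Y →
          t ∈ Function.update ρ₁ X U Y) := by
      intro Y hY
      by_cases hYX : Y = X
      · subst hYX
        refine Or.inl ⟨hposX, fun s t hst hsU => ?_⟩
        rw [Function.update_self] at hsU ⊢
        exact ⟨s, hsU, hst⟩
      · have hY' : Y ∈ fvF (Form.nu X φ₀) := ⟨hY, hYX⟩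
        rcases hρ Y hY' with ⟨hp, hf⟩ | ⟨hn, hf⟩
        · refine Or.inl ⟨?_, ?_⟩
          · rcases hp with h | h
            · exact absurd h.symm hYX
            · exact h
          · simpa [Function.update_of_ne hYX] using hf
        · refine Or.inr ⟨?_, ?_⟩
          · rcases hn with h | h
            · exact absurd h.symm hYX
            · exact h
          · simpa [Function.update_of_ne hYX] using hf
    refine ⟨V, ?_, ⟨s, hsU, hR⟩⟩
    intro t' ht'
    obtain ⟨s', hs'U, hR'⟩ := ht'
    exact ih hm₀ _ _ hρ' s' t' hR' (hU hs'U)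
  | var Y =>
    intro _ ρ₁ ρ₂ hρ s t hR hs
    rcases hρ Y rfl with ⟨_, hf⟩ | ⟨hn, _⟩
    · exact hf s t hR hs
    · exact absurd rfl hn

/-- Strongly bisimilar states satisfy the same closed (syntactically monotonic)
modal μ-calculus formulas. -/
theorem bisim_invariance {σ α χ : Type} [DecidableEq χ] (L : LTS σ α)
    (R : σ → σ → Prop) (hsym : ∀ s t, R s t → R t s)
    (hbisim : ∀ s t, R s t → ∀ a s', L.trans s a s' → ∃ t', L.trans t a t' ∧ R s' t')
    (φ : Form α χ) (hclosed : fvF φ = ∅) (hmono : SynMono φ)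
    (s t : σ) (hR : R s t) :
    s ∈ sem L φ (fun _ => (∅ : Set σ)) ↔ t ∈ sem L φ (fun _ => (∅ : Set σ)) := by
  have hvac : ∀ X, X ∈ fvF φ →
      (posIn φ X ∧ ∀ s t : σ, R s t → s ∈ (∅ : Set σ) → t ∈ (∅ : Set σ)) ∨
      (negIn φ X ∧ ∀ s t : σ, R s t → s ∈ (∅ : Set σ) → t ∈ (∅ : Set σ)) := by
    intro X hX
    rw [hclosed] at hX
    exact hX.elim
  constructor
  · exact fun h => key_bisim L R hsym hbisim φ hmono _ _ hvac s t hR h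
  · exact fun h => key_bisim L R hsym hbisim φ hmono _ _ hvac t s (hsym s t hR) h
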